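/- Let X be a complete CAT(0) space and let H₁, …, H_ℓ be pairwise commuting subgroups of Isom(X) (i.e., every element of H_i commutes with every element of H_j for i ≠ j). If Fix(H_i) is non-empty for each i, then the intersection of all the Fix(H_i) is non-empty. -/

import Mathlib

/-- A geodesic segment from `x` to `y`, parameterized proportionally to arc length on `[0,1]`. -/
def IsGeodesicSeg {X : Type*} [MetricSpace X] (x y : X) (γ : ℝ → X) : Prop :=
  γ 0 = x ∧ γ 1 = y ∧
    ∀ s ∈ Set.Icc (0:ℝ) 1, ∀ t ∈ Set.Icc (0:ℝ) 1, dist (γ s) (γ t) = |s - t| * dist x y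

/-- A CAT(0) space: a geodesic metric space satisfying the CN (Bruhat–Tits comparison)
inequality, which for geodesic spaces is equivalent to the CAT(0) comparison-triangle
condition. -/
class CAT0Space (X : Type*) [MetricSpace X] : Prop where
  geodesic : ∀ x y : X, ∃ γ : ℝ → X, IsGeodesicSeg x y γ
  cn : ∀ x y z m : X, dist y m = dist y z / 2 → dist z m = dist y z / 2 →
    dist x m ^ 2 ≤ (dist x y ^ 2 + dist x z ^ 2) / 2 - dist y z ^ 2 / 4

/-!
Midpoints in a CAT(0) space are unique, so `Fix(Hᵢ)` is closed under midpoints; it is also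
closed, and `Hⱼ` preserves it for `j ≠ i` since the two subgroups commute. The CN inequality
makes minimizing sequences for the distance from `x₀` to a nonempty closed midpoint-closed set `A`
Cauchy, so `A` has a unique point nearest to `x₀`. If a group `K` fixes `x₀` and preserves `A`,
every `h ∈ K` moves that point to a point of `A` at the same distance from `h x₀ = x₀`, so `K`
fixes it. Induction then adds one subgroup at a time, with `K = Hⱼ` and `A` the intersection of
the fixed sets already treated.
-/

section FixedPoints

open Set Filter Topology Metric

variable {X : Type*} [MetricSpace X]

def IsMidpoint (y z m : X) : Prop :=
  dist y m = dist y z / 2 ∧ dist z m = dist y z / 2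

def IsMidpointClosed (A : Set X) : Prop :=
  ∀ y ∈ A, ∀ z ∈ A, ∀ m, IsMidpoint y z m → m ∈ A

def fixSet (K : Subgroup (X ≃ᵢ X)) : Set X :=
  {x | ∀ h ∈ K, h x = x}

lemma IsMidpoint.map_isometry {Y : Type*} [MetricSpace Y] {f : X → Y} (hf : Isometry f)
    {y z m : X} (h : IsMidpoint y z m) : IsMidpoint (f y) (f z) (f m) := by
  simpa only [IsMidpoint, hf.dist_eq] using h

lemma isMidpointClosed_biInter {ι : Type*} {s : Set ι} {A : ι → Set X}
    (hA : ∀ i ∈ s, IsMidpointClosed (A i)) : IsMidpointClosed (⋂ i ∈ s, A i) := by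
  intro y hy z hz m hm
  simp only [mem_iInter] at hy hz ⊢
  exact fun i hi => hA i hi y (hy i hi) z (hz i hi) m hm

lemma isClosed_fixSet (K : Subgroup (X ≃ᵢ X)) : IsClosed (fixSet K) := by
  simp only [fixSet, ofPred_forall]
  exact isClosed_biInter fun h _ => isClosed_eq h.continuous continuous_id

lemma mapsTo_fixSet_of_commute {K L : Subgroup (X ≃ᵢ X)}
    (hKL : ∀ a ∈ K, ∀ b ∈ L, Commute a b) {b : X ≃ᵢ X} (hb : b ∈ L) :
    MapsTo b (fixSet K) (fixSet K) := by
  intro x hx a ha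
  calc a (b x) = (a * b) x := rfl
    _ = (b * a) x := by rw [(hKL a ha b hb).eq]
    _ = b x := congrArg b (hx a ha)

namespace CAT0Space

variable [CAT0Space X]

lemma exists_isMidpoint (y z : X) : ∃ m, IsMidpoint y z m := by
  obtain ⟨γ, hγ0, hγ1, hγ⟩ := CAT0Space.geodesic y z
  have half : (1 / 2 : ℝ) ∈ Icc 0 1 := by norm_num
  refine ⟨γ (1 / 2), ?_, ?_⟩
  · rw [← hγ0, hγ 0 (by norm_num) _ half, hγ0]
    norm_num [div_eq_inv_mul]
  · rw [← hγ1, hγ 1 (by norm_num) _ half, hγ1]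
    norm_num [div_eq_inv_mul]

lemma isMidpoint_unique {y z m m' : X} (hm : IsMidpoint y z m) (hm' : IsMidpoint y z m') :
    m = m' := by
  have hcn := CAT0Space.cn m' y z m hm.1 hm.2
  rw [dist_comm m' y, dist_comm m' z, hm'.1, hm'.2] at hcn
  have : dist m' m = 0 := by nlinarith [dist_nonneg (x := m') (y := m)]
  exact (dist_eq_zero.mp this).symm

lemma isMidpointClosed_fixSet (K : Subgroup (X ≃ᵢ X)) : IsMidpointClosed (fixSet K) := by
  intro y hy z hz m hm h hh
  have hhm := hm.map_isometry h.isometry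
  rw [hy h hh, hz h hh] at hhm
  exact isMidpoint_unique hhm hm

lemma dist_sq_le_of_isMidpointClosed {A : Set X} (hA : IsMidpointClosed A) {a b : X}
    (ha : a ∈ A) (hb : b ∈ A) (x : X) :
    dist a b ^ 2 ≤ 2 * (dist x a ^ 2 + dist x b ^ 2) - 4 * infDist x A ^ 2 := by
  obtain ⟨m, hm⟩ := exists_isMidpoint a b
  have hcn := CAT0Space.cn x a b m hm.1 hm.2
  have hd : infDist x A ≤ dist x m := infDist_le_dist_of_mem (hA a ha b hb m hm)
  nlinarith [infDist_nonneg (x := x) (s := A)]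

lemma eq_of_dist_eq_infDist {A : Set X} (hA : IsMidpointClosed A) {x p q : X}
    (hp : p ∈ A) (hq : q ∈ A) (hpx : dist x p = infDist x A) (hqx : dist x q = infDist x A) :
    p = q := by
  have h := dist_sq_le_of_isMidpointClosed hA hp hq x
  rw [hpx, hqx] at h
  have : dist p q = 0 := by nlinarith [dist_nonneg (x := p) (y := q)]
  exact dist_eq_zero.mp this

variable [CompleteSpace X]

lemma exists_dist_eq_infDist {A : Set X} (hne : A.Nonempty) (hcl : IsClosed A)
    (hA : IsMidpointClosed A) (x : X) : ∃ p ∈ A, dist x p = infDist x A := by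
  set d := infDist x A
  set δ : ℕ → ℝ := fun n => 1 / ((n : ℝ) + 1)
  have hδ : Tendsto δ atTop (𝓝 0) := tendsto_one_div_add_atTop_nhds_zero_nat
  have hδ_anti : Antitone δ := fun m n hmn => by
    dsimp only [δ]; gcongr
  have hu : ∀ n, ∃ a ∈ A, dist x a < d + δ n := fun n =>
    (infDist_lt_iff hne).mp (lt_add_of_pos_right d (by positivity))
  choose u huA hud using hu
  have hcauchy : CauchySeq u := by
    refine cauchySeq_of_le_tendsto_0 (fun N => √(4 * ((d + δ N) ^ 2 - d ^ 2)))
      (fun n m N hn hm => Real.le_sqrt_of_sq_le ?_) ?_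
    · have hn' : dist x (u n) ^ 2 ≤ (d + δ N) ^ 2 := by
        gcongr; exact (hud n).le.trans (by gcongr; exact hδ_anti hn)
      have hm' : dist x (u m) ^ 2 ≤ (d + δ N) ^ 2 := by
        gcongr; exact (hud m).le.trans (by gcongr; exact hδ_anti hm)
      linarith [dist_sq_le_of_isMidpointClosed hA (huA n) (huA m) x]
    · have hf : Continuous fun t : ℝ => √(4 * ((d + t) ^ 2 - d ^ 2)) := by fun_prop
      simpa [Function.comp_def] using (hf.tendsto 0).comp hδ
  obtain ⟨p, hp⟩ := cauchySeq_tendsto_of_complete hcauchy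
  have hdist : Tendsto (fun n => dist x (u n)) atTop (𝓝 (dist x p)) := tendsto_const_nhds.dist hp
  have hpA : p ∈ A := hcl.mem_of_tendsto hp (Eventually.of_forall huA)
  refine ⟨p, hpA, le_antisymm ?_ (infDist_le_dist_of_mem hpA)⟩
  have hlim : Tendsto (fun n => d + δ n) atTop (𝓝 d) := by
    simpa using tendsto_const_nhds.add hδ
  exact le_of_tendsto_of_tendsto hdist hlim (Eventually.of_forall fun n => (hud n).le)

lemma inter_fixSet_nonempty {A : Set X} (hne : A.Nonempty) (hcl : IsClosed A)
    (hA : IsMidpointClosed A) {K : Subgroup (X ≃ᵢ X)} (hK : (fixSet K).Nonempty)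
    (hKA : ∀ h ∈ K, MapsTo h A A) : (A ∩ fixSet K).Nonempty := by
  obtain ⟨x, hx⟩ := hK
  obtain ⟨p, hpA, hpx⟩ := exists_dist_eq_infDist hne hcl hA x
  refine ⟨p, hpA, fun h hh => eq_of_dist_eq_infDist hA (hKA h hh hpA) hpA ?_ hpx⟩
  rw [← hx h hh, h.dist_eq, hx h hh, hpx]

end CAT0Space

end FixedPoints

/-- Pairwise commuting subgroups of the isometry group of a complete CAT(0) space, each with
a nonempty fixed-point set, have a common fixed point. -/
theorem fix_inter_of_pairwise_commuting {X : Type*} [MetricSpace X] [CompleteSpace X]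
    [CAT0Space X] {ℓ : ℕ} (hl : 0 < ℓ) (H : Fin ℓ → Subgroup (X ≃ᵢ X))
    (hcomm : ∀ i j, i ≠ j → ∀ a ∈ H i, ∀ b ∈ H j, Commute a b)
    (hfix : ∀ i, ∃ x : X, ∀ h ∈ H i, h x = x) :
    ∃ x : X, ∀ i, ∀ h ∈ H i, h x = x := by
  suffices ∀ s : Finset (Fin ℓ), (⋂ i ∈ s, fixSet (H i)).Nonempty by
    simpa [fixSet] using this Finset.univ
  intro s
  induction s using Finset.induction_on with
  | empty =>
    obtain ⟨x, -⟩ := hfix ⟨0, hl⟩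
    exact ⟨x, by simp⟩
  | insert j s hj ih =>
    rw [Finset.set_biInter_insert, Set.inter_comm]
    refine CAT0Space.inter_fixSet_nonempty ih (isClosed_biInter fun i _ => isClosed_fixSet _)
      (isMidpointClosed_biInter fun i _ => CAT0Space.isMidpointClosed_fixSet _) (hfix j)
      fun h hh => ?_
    exact Set.mapsTo_iInter₂_iInter₂ fun i hi =>
      mapsTo_fixSet_of_commute (hcomm i j (ne_of_mem_of_not_mem hi hj)) hh
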